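/- Let $L\subset\mathbb{R}^d$ be a Bravais lattice with first distance $\lambda_1$ and second distance $\lambda_2$, and fix constants $C>0$, $\mu>0$, $\varepsilon>0$, $p>d$, $\eta>0$, $\delta>0$ and $r_0\in[\lambda_1,\lambda_2)$. Then there exists $\theta_0>0$ such that for every $\theta\in[0,\theta_0]$ and every $d$-admissible potential $V_\theta$ satisfying $|\mathcal{P}(L,V_\theta)|\le C\theta^{1+\mu}$, $|V_\theta''(r)|\le\theta^{2+\varepsilon}r^{-p-2}$ for all $r>r_0$, and $V_\theta''(r)\ge\eta$ for all $r\in(\lambda_1-\delta,\lambda_1+\delta)$, one has $\sum_{x\in L^*}\big[\|x\|^2V_\theta''(\|x\|)-\|x\|V_\theta'(\|x\|)\big]\ \ge\ \lambda_1^2 m(\lambda_1)\eta-\theta^{2+\varepsilon}\zeta_L^*(p)-C\theta^{1+\mu}\ >\ 0$ (in particular the isothermal compressibility of $L$ submitted to $V_\theta$ is positive). -/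

import Mathlib

/-!
Every `x ∈ L*` has either `‖x‖ = λ₁` or `‖x‖ ≥ λ₂ > r₀`. The `m(λ₁)` points of the first shell
contribute exactly `λ₁² m(λ₁) V''(λ₁) ≥ λ₁² m(λ₁) η` to `∑ ‖x‖² V''(‖x‖)`; on the other points the
decay assumption gives `|‖x‖² V''(‖x‖)| ≤ θ^{2+ε} ‖x‖^{-p}`, which is summable over `L` since
`p > d`. The remaining term `-∑ ‖x‖ V'(‖x‖)` is the pressure, at least `-C θ^{1+μ}`. Both error
terms tend to `0` with `θ`, while `λ₁ > 0` and `m(λ₁) ≥ 1` by discreteness of `L`.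
-/

noncomputable section
open scoped BigOperators
open scoped Classical

/-- Points of `ℝ^d`. -/
abbrev Esp (d : ℕ) := EuclideanSpace ℝ (Fin d)

/-- `L` is a Bravais lattice of `ℝ^d`: the set of integer linear combinations
of a basis of `ℝ^d`. -/
def IsBravais {d : ℕ} (L : Set (Esp d)) : Prop :=
  ∃ b : Module.Basis (Fin d) ℝ (Esp d),
    L = Set.range fun c : Fin d → ℤ => ∑ i, (c i : ℝ) • b i

/-- First distance `λ₁` of the lattice. -/
def lam1 {d : ℕ} (L : Set (Esp d)) : ℝ :=
  sInf {r | ∃ x ∈ L, x ≠ 0 ∧ ‖x‖ = r}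

/-- Second distance `λ₂` of the lattice. -/
def lam2 {d : ℕ} (L : Set (Esp d)) : ℝ :=
  sInf {r | ∃ x ∈ L, lam1 L < ‖x‖ ∧ ‖x‖ = r}

/-- `m(λ)`: number of lattice points of norm `λ`. -/
def mCard {d : ℕ} (L : Set (Esp d)) (lam : ℝ) : ℕ :=
  Nat.card {x : Esp d // x ∈ L ∧ ‖x‖ = lam}

/-- A `d`-admissible potential: `C²` on `(0,∞)` and with absolutely convergent
lattice sums for `V`, `r V'` and `r² V''` on every Bravais lattice of `ℝ^d`. -/
def Admissible (d : ℕ) (V : ℝ → ℝ) : Prop :=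
  ContDiffOn ℝ 2 V (Set.Ioi 0) ∧
  ∀ L : Set (Esp d), IsBravais L →
    (Summable fun x : {x : Esp d // x ∈ L ∧ x ≠ 0} => |V ‖(x : Esp d)‖|) ∧
    (Summable fun x : {x : Esp d // x ∈ L ∧ x ≠ 0} =>
      ‖(x : Esp d)‖ * |deriv V ‖(x : Esp d)‖|) ∧
    (Summable fun x : {x : Esp d // x ∈ L ∧ x ≠ 0} =>
      ‖(x : Esp d)‖ ^ 2 * |deriv (deriv V) ‖(x : Esp d)‖|)

/-- Pressure of `L` submitted to `V`. -/
def pressure {d : ℕ} (L : Set (Esp d)) (V : ℝ → ℝ) : ℝ :=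
  -∑' x : {x : Esp d // x ∈ L ∧ x ≠ 0}, ‖(x : Esp d)‖ * deriv V ‖(x : Esp d)‖

/-- Lattice sum `ζ*_L(n) = ∑_{x ∈ L, ‖x‖ > λ₁} ‖x‖^{-n}`. -/
def zetaStar {d : ℕ} (L : Set (Esp d)) (n : ℝ) : ℝ :=
  ∑' x : {x : Esp d // x ∈ L ∧ lam1 L < ‖x‖}, ‖(x : Esp d)‖ ^ (-n)

/-- Lattice sum `ζ̄_L(n) = ∑_{x ∈ L, ‖x‖ > λ₁} (‖x‖ - λ₁)^{-n}`. -/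
def zetaBar {d : ℕ} (L : Set (Esp d)) (n : ℝ) : ℝ :=
  ∑' x : {x : Esp d // x ∈ L ∧ lam1 L < ‖x‖}, (‖(x : Esp d)‖ - lam1 L) ^ (-n)

/-- `f` realizes an `α`-compact perturbation `f '' B` of `B`:
each `b ∈ B` is moved to `f b` with `‖b - f b‖ ≤ α`, and `f b` is the unique point of the
perturbed family within distance `α` of `b`. -/
def IsPertMap {d : ℕ} (B : Set (Esp d)) (f : Esp d → Esp d) (α : ℝ) : Prop :=
  ∀ b ∈ B, ‖b - f b‖ ≤ α ∧ ∀ b' ∈ B, ‖b - f b'‖ ≤ α → f b' = f b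

/-- The point of the perturbed configuration corresponding to `x ∈ L`. -/
def pertPoint {d : ℕ} (B : Set (Esp d)) (f : Esp d → Esp d) (x : Esp d) : Esp d :=
  if x ∈ B then f x else x

/-- The perturbed configuration `L^α(B) = (L \ B) ∪ B^α`. -/
def pertLattice {d : ℕ} (L B : Set (Esp d)) (f : Esp d → Esp d) : Set (Esp d) :=
  (L \ B) ∪ f '' B

/-- `α_{i,x} = ‖b_i^α - y‖ - ‖b_i - x‖`. -/
def alphaCoef {d : ℕ} (B : Set (Esp d)) (f : Esp d → Esp d) (b x : Esp d) : ℝ :=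
  ‖f b - pertPoint B f x‖ - ‖b - x‖

/-- The energy difference `Δ_L^α(V; B)` between the perturbed and unperturbed
configurations. -/
def Delta {d : ℕ} (L : Set (Esp d)) (B : Finset (Esp d)) (f : Esp d → Esp d)
    (V : ℝ → ℝ) : ℝ :=
  (∑ b ∈ B, ∑' y : {y : Esp d // y ∈ pertLattice L ↑B f ∧ y ≠ f b}, V ‖f b - (y : Esp d)‖)
  - ∑ b ∈ B, ∑' x : {x : Esp d // x ∈ L ∧ x ≠ b}, V ‖b - (x : Esp d)‖

open Filter Topology

section Lattice

variable {d : ℕ} {L : Set (Esp d)} {f : Esp d → ℝ}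

theorem IsBravais.exists_basis_eq_span (hL : IsBravais L) :
    ∃ b : Module.Basis (Fin d) ℝ (Esp d), L = Submodule.span ℤ (Set.range b) := by
  obtain ⟨b, rfl⟩ := hL
  refine ⟨b, Set.ext fun x => ?_⟩
  simp only [Set.mem_range, SetLike.mem_coe, Submodule.mem_span_range_iff_exists_fun,
    Int.cast_smul_eq_zsmul]

theorem IsBravais.finite_inter (hL : IsBravais L) {s : Set (Esp d)}
    (hs : Bornology.IsBounded s) : (s ∩ L).Finite := by
  obtain ⟨b, rfl⟩ := hL.exists_basis_eq_span
  exact ZSpan.setFinite_inter b hs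

theorem IsBravais.summable_norm_rpow (hL : IsBravais L) {p : ℝ} (hp : (d : ℝ) < p)
    {P : Esp d → Prop} (hP : ∀ x, P x → x ∈ L) :
    Summable fun x : {x // P x} => ‖(x : Esp d)‖ ^ (-p) := by
  obtain ⟨b, rfl⟩ := hL.exists_basis_eq_span
  have hrank : Module.finrank ℤ (Submodule.span ℤ (Set.range b)) = d := by
    rw [ZLattice.rank ℝ, finrank_euclideanSpace_fin]
  have hsum := ZLattice.summable_norm_rpow (Submodule.span ℤ (Set.range b)) (-p)
    (by rw [hrank]; linarith)
  let i : {x // P x} → Submodule.span ℤ (Set.range b) := fun x => ⟨x, hP x x.2⟩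
  have hi : Function.Injective i := fun x y h =>
    Subtype.ext (by simpa [i, Subtype.ext_iff] using h)
  exact (hsum.comp_injective hi).congr fun x => by simp [i]

theorem lam1_le_norm {x : Esp d} (hx : x ∈ L) (hx0 : x ≠ 0) : lam1 L ≤ ‖x‖ :=
  csInf_le ⟨0, by rintro _ ⟨y, -, -, rfl⟩; exact norm_nonneg y⟩ ⟨x, hx, hx0, rfl⟩

theorem lam2_le_norm {x : Esp d} (hx : x ∈ L) (hlt : lam1 L < ‖x‖) : lam2 L ≤ ‖x‖ :=
  csInf_le ⟨0, by rintro _ ⟨y, -, -, rfl⟩; exact norm_nonneg y⟩ ⟨x, hx, hlt, rfl⟩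

theorem lam1_nonneg : 0 ≤ lam1 L :=
  Real.sInf_nonneg <| by rintro _ ⟨y, -, -, rfl⟩; exact norm_nonneg y

-- Since `sInf ∅ = 0`, a lattice without nonzero points has `λ₁ = λ₂ = 0`.
theorem exists_lam1_lt_norm_of_lam1_lt_lam2 (h : lam1 L < lam2 L) :
    ∃ x ∈ L, lam1 L < ‖x‖ := by
  by_contra! hL
  have hempty : {r | ∃ x ∈ L, lam1 L < ‖x‖ ∧ ‖x‖ = r} = ∅ :=
    Set.eq_empty_of_forall_notMem fun _ ⟨x, hx, hlt, _⟩ => (hL x hx).not_gt hlt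
  have : lam2 L = 0 := by rw [lam2, hempty, Real.sInf_empty]
  linarith [lam1_nonneg (L := L)]

theorem exists_norm_eq_lam1 (hfin : ∀ R, (Metric.closedBall 0 R ∩ L).Finite)
    {x : Esp d} (hx : x ∈ L) (hx0 : x ≠ 0) : ∃ y ∈ L, y ≠ 0 ∧ ‖y‖ = lam1 L := by
  set S := (Metric.closedBall 0 ‖x‖ ∩ L) \ {0}
  have hxS : x ∈ S := ⟨⟨by simp, hx⟩, hx0⟩
  obtain ⟨y, ⟨⟨hyx, hy⟩, hy0 : y ≠ 0⟩, hmin⟩ :=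
    S.exists_min_image (‖·‖) ((hfin _).subset Set.sdiff_subset) ⟨x, hxS⟩
  have hyx : ‖y‖ ≤ ‖x‖ := by simpa using hyx
  have hleast : IsLeast {r | ∃ x ∈ L, x ≠ 0 ∧ ‖x‖ = r} ‖y‖ := by
    refine ⟨⟨y, hy, hy0, rfl⟩, ?_⟩
    rintro _ ⟨z, hz, hz0, rfl⟩
    rcases le_total ‖z‖ ‖x‖ with hzx | hxz
    · exact hmin z ⟨⟨by simpa using hzx, hz⟩, hz0⟩
    · exact hyx.trans hxz
  exact ⟨y, hy, hy0, hleast.csInf_eq.symm⟩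

theorem mCard_norm_pos (hfin : ∀ R, (Metric.closedBall 0 R ∩ L).Finite) {x : Esp d}
    (hx : x ∈ L) : 0 < mCard L ‖x‖ := by
  have : Finite {y : Esp d // y ∈ L ∧ ‖y‖ = ‖x‖} :=
    Set.Finite.to_subtype <| (hfin ‖x‖).subset fun y ⟨hy, hyx⟩ => ⟨by simp [hyx], hy⟩
  have : Nonempty {y : Esp d // y ∈ L ∧ ‖y‖ = ‖x‖} := ⟨⟨x, hx, rfl⟩⟩
  exact Nat.card_pos

theorem setOf_ne_zero_eq_union (hlam1 : 0 < lam1 L) :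
    {x | x ∈ L ∧ x ≠ 0} = {x | x ∈ L ∧ ‖x‖ = lam1 L} ∪ {x | x ∈ L ∧ lam1 L < ‖x‖} := by
  ext x
  constructor
  · rintro ⟨hx, hx0⟩
    exact (lam1_le_norm hx hx0).eq_or_lt.imp (fun h => ⟨hx, h.symm⟩) fun h => ⟨hx, h⟩
  · rintro (⟨hx, hxn⟩ | ⟨hx, hxn⟩) <;> refine ⟨hx, ?_⟩ <;> rintro rfl <;>
      simp only [norm_zero] at hxn <;> linarith

theorem tsum_comp_norm_eq_mCard_mul (g : ℝ → ℝ) (r : ℝ) :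
    ∑' x : {x : Esp d // x ∈ L ∧ ‖x‖ = r}, g ‖(x : Esp d)‖ = mCard L r * g r := by
  rw [tsum_congr fun x => congrArg g x.2.2, tsum_const, nsmul_eq_mul]
  rfl

theorem Summable.lam1_lt_norm_of_ne_zero (hlam1 : 0 < lam1 L)
    (hsum : Summable fun x : {x : Esp d // x ∈ L ∧ x ≠ 0} => f x) :
    Summable fun x : {x : Esp d // x ∈ L ∧ lam1 L < ‖x‖} => f x := by
  let i : {x : Esp d // x ∈ L ∧ lam1 L < ‖x‖} → {x : Esp d // x ∈ L ∧ x ≠ 0} :=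
    fun x => ⟨x, x.2.1, norm_pos_iff.1 (hlam1.trans x.2.2)⟩
  have hi : Function.Injective i := fun x y h => by
    simp only [i, Subtype.mk.injEq] at h
    exact Subtype.ext h
  exact hsum.comp_injective hi

theorem tsum_ne_zero_eq_add (hlam1 : 0 < lam1 L)
    (hsum : Summable fun x : {x : Esp d // x ∈ L ∧ x ≠ 0} => f x) :
    ∑' x : {x : Esp d // x ∈ L ∧ x ≠ 0}, f x =
      ∑' x : {x : Esp d // x ∈ L ∧ ‖x‖ = lam1 L}, f x +
        ∑' x : {x : Esp d // x ∈ L ∧ lam1 L < ‖x‖}, f x := by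
  have hunion := setOf_ne_zero_eq_union hlam1
  have hsum' : Summable fun x : ↥({x : Esp d | x ∈ L ∧ ‖x‖ = lam1 L} ∪
      {x | x ∈ L ∧ lam1 L < ‖x‖}) => f x := by
    rwa [← hunion]
  change ∑' x : ↥{x : Esp d | x ∈ L ∧ x ≠ 0}, f x = _
  rw [hunion]
  exact Summable.tsum_union_disjoint (Set.disjoint_left.2 fun _ ⟨_, h⟩ ⟨_, h'⟩ => h'.ne' h)
    (hsum'.comp_injective (Set.inclusion_injective Set.subset_union_left))
    (hsum'.comp_injective (Set.inclusion_injective Set.subset_union_right))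

end Lattice

theorem lam1_sq_mul_mCard_mul_sub_le_tsum {d : ℕ} {L : Set (Esp d)} {g : ℝ → ℝ} {η K p : ℝ}
    (hlam1 : 0 < lam1 L)
    (hsum : Summable fun x : {x : Esp d // x ∈ L ∧ x ≠ 0} => ‖(x : Esp d)‖ ^ 2 * g ‖(x : Esp d)‖)
    (hζ : Summable fun x : {x : Esp d // x ∈ L ∧ lam1 L < ‖x‖} => ‖(x : Esp d)‖ ^ (-p))
    (hη : η ≤ g (lam1 L))
    (htail : ∀ x ∈ L, lam1 L < ‖x‖ → |‖x‖ ^ 2 * g ‖x‖| ≤ K * ‖x‖ ^ (-p)) :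
    lam1 L ^ 2 * mCard L (lam1 L) * η - K * zetaStar L p ≤
      ∑' x : {x : Esp d // x ∈ L ∧ x ≠ 0}, ‖(x : Esp d)‖ ^ 2 * g ‖(x : Esp d)‖ := by
  have hshell : lam1 L ^ 2 * mCard L (lam1 L) * η ≤
      ∑' x : {x : Esp d // x ∈ L ∧ ‖x‖ = lam1 L}, ‖(x : Esp d)‖ ^ 2 * g ‖(x : Esp d)‖ := by
    rw [tsum_comp_norm_eq_mCard_mul (fun r => r ^ 2 * g r)]
    have := mul_le_mul_of_nonneg_left hη (by positivity : 0 ≤ (mCard L (lam1 L) : ℝ) * lam1 L ^ 2)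
    linarith
  have htail : -(K * zetaStar L p) ≤
      ∑' x : {x : Esp d // x ∈ L ∧ lam1 L < ‖x‖}, ‖(x : Esp d)‖ ^ 2 * g ‖(x : Esp d)‖ := by
    rw [zetaStar, ← tsum_mul_left, ← tsum_neg]
    refine (hζ.mul_left K).neg.tsum_le_tsum (fun x => neg_le_of_abs_le ?_)
      (Summable.lam1_lt_norm_of_ne_zero (f := fun y => ‖y‖ ^ 2 * g ‖y‖) hlam1 hsum)
    exact htail x x.2.1 x.2.2
  rw [tsum_ne_zero_eq_add (f := fun y => ‖y‖ ^ 2 * g ‖y‖) hlam1 hsum]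
  linarith

theorem sq_mul_abs_le_of_abs_le_rpow {r a K p : ℝ} (hr : 0 < r) (h : |a| ≤ K * r ^ (-p - 2)) :
    |r ^ 2 * a| ≤ K * r ^ (-p) := by
  have hpow : r ^ 2 * r ^ (-p - 2) = r ^ (-p) := by
    rw [← Real.rpow_natCast, ← Real.rpow_add hr]; norm_num
  calc |r ^ 2 * a| = r ^ 2 * |a| := by rw [abs_mul, abs_of_nonneg (by positivity)]
    _ ≤ r ^ 2 * (K * r ^ (-p - 2)) := by gcongr
    _ = K * r ^ (-p) := by rw [← hpow]; ring

theorem Admissible.summable_sq_mul_deriv_deriv {d : ℕ} {V : ℝ → ℝ} (hV : Admissible d V)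
    {L : Set (Esp d)} (hL : IsBravais L) :
    Summable fun x : {x : Esp d // x ∈ L ∧ x ≠ 0} =>
      ‖(x : Esp d)‖ ^ 2 * deriv (deriv V) ‖(x : Esp d)‖ :=
  Summable.of_abs <| ((hV.2 L hL).2.2).congr fun x => by
    rw [abs_mul, abs_pow, abs_norm]

theorem Admissible.summable_norm_mul_deriv {d : ℕ} {V : ℝ → ℝ} (hV : Admissible d V)
    {L : Set (Esp d)} (hL : IsBravais L) :
    Summable fun x : {x : Esp d // x ∈ L ∧ x ≠ 0} => ‖(x : Esp d)‖ * deriv V ‖(x : Esp d)‖ :=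
  Summable.of_abs <| ((hV.2 L hL).2.1).congr fun x => by
    rw [abs_mul, abs_norm]

theorem exists_pos_forall_rpow_mul_add_mul_rpow_lt {a s t A B : ℝ} (ha : 0 < a) (hs : 0 < s)
    (ht : 0 < t) : ∃ θ0 : ℝ, 0 < θ0 ∧ ∀ θ : ℝ, 0 ≤ θ → θ ≤ θ0 → θ ^ s * A + B * θ ^ t < a := by
  have hcont : Tendsto (fun θ : ℝ => θ ^ s * A + B * θ ^ t) (𝓝 0) (𝓝 0) := by
    have := ((Real.continuousAt_rpow_const 0 s (Or.inr hs.le)).tendsto.mul_const A).add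
      ((Real.continuousAt_rpow_const 0 t (Or.inr ht.le)).tendsto.const_mul B)
    simpa [Real.zero_rpow hs.ne', Real.zero_rpow ht.ne'] using this
  obtain ⟨θ0, hθ0, hlt⟩ := (nhds_basis_Icc_pos (0 : ℝ)).eventually_iff.1
    (hcont.eventually (gt_mem_nhds ha))
  exact ⟨θ0, hθ0, fun θ h0 hθ => hlt ⟨by linarith, by linarith⟩⟩

theorem statement9_general (d : ℕ) (L : Set (Esp d)) (hL : IsBravais L)
    (C μ ε p η δ r0 : ℝ)
    (hμ : 0 < μ) (hε : 0 < ε) (hp : (d : ℝ) < p) (hη : 0 < η) (hδ : 0 < δ)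
    (hr0 : lam1 L ≤ r0) (hr0' : r0 < lam2 L) :
    ∃ θ0 : ℝ, 0 < θ0 ∧
      ∀ θ : ℝ, 0 ≤ θ → θ ≤ θ0 →
        ∀ V : ℝ → ℝ, Admissible d V →
          |pressure L V| ≤ C * θ ^ (1 + μ) →
          (∀ r : ℝ, r0 < r → |deriv (deriv V) r| ≤ θ ^ (2 + ε) * r ^ (-p - 2)) →
          (∀ r : ℝ, r ∈ Set.Ioo (lam1 L - δ) (lam1 L + δ) → η ≤ deriv (deriv V) r) →
          (∑' x : {x : Esp d // x ∈ L ∧ x ≠ 0},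
              (‖(x : Esp d)‖ ^ 2 * deriv (deriv V) ‖(x : Esp d)‖
                - ‖(x : Esp d)‖ * deriv V ‖(x : Esp d)‖)) ≥
            (lam1 L) ^ 2 * (mCard L (lam1 L) : ℝ) * η - θ ^ (2 + ε) * zetaStar L p
              - C * θ ^ (1 + μ) ∧
          (0 : ℝ) < (lam1 L) ^ 2 * (mCard L (lam1 L) : ℝ) * η - θ ^ (2 + ε) * zetaStar L p
              - C * θ ^ (1 + μ) := by
  have hfin : ∀ R, (Metric.closedBall 0 R ∩ L).Finite :=
    fun R => hL.finite_inter Metric.isBounded_closedBall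
  obtain ⟨x1, hx1, hlt⟩ := exists_lam1_lt_norm_of_lam1_lt_lam2 (hr0.trans_lt hr0')
  obtain ⟨x0, hx0, hx0_ne, hx0_norm⟩ :=
    exists_norm_eq_lam1 hfin hx1 (norm_pos_iff.1 (lam1_nonneg.trans_lt hlt))
  have hlam1 : 0 < lam1 L := hx0_norm ▸ norm_pos_iff.2 hx0_ne
  have hm : 0 < mCard L (lam1 L) := hx0_norm ▸ mCard_norm_pos hfin hx0
  obtain ⟨θ0, hθ0, hsmall⟩ := exists_pos_forall_rpow_mul_add_mul_rpow_lt
    (A := zetaStar L p) (B := C) (by positivity : 0 < lam1 L ^ 2 * (mCard L (lam1 L) : ℝ) * η)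
    (by linarith : 0 < 2 + ε) (by linarith : 0 < 1 + μ)
  refine ⟨θ0, hθ0, fun θ hθ hθθ0 V hV hpress htail hshell => ⟨?_, ?_⟩⟩
  · have hsq := lam1_sq_mul_mCard_mul_sub_le_tsum hlam1 (hV.summable_sq_mul_deriv_deriv hL)
      (hL.summable_norm_rpow hp fun _ hx => hx.1) (hshell _ ⟨by linarith, by linarith⟩)
      fun x hx hxlt => sq_mul_abs_le_of_abs_le_rpow (hlam1.trans hxlt)
        (htail _ (hr0'.trans_le (lam2_le_norm hx hxlt)))
    have hpressure := neg_le_of_abs_le hpress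
    rw [pressure, neg_le_neg_iff] at hpressure
    rw [ge_iff_le, Summable.tsum_sub (hV.summable_sq_mul_deriv_deriv hL)
      (hV.summable_norm_mul_deriv hL)]
    linarith
  · linarith [hsmall θ hθ hθθ0]

/-- positivity of the isothermal compressibility: for `θ` small enough,
`∑_{x ∈ L*} [‖x‖² V_θ''(‖x‖) - ‖x‖ V_θ'(‖x‖)] ≥ λ₁² m(λ₁) η - θ^{2+ε} ζ*_L(p) - C θ^{1+μ} > 0`. -/
theorem statement9 (d : ℕ) (L : Set (Esp d)) (hL : IsBravais L)
    (C μ ε p η δ r0 : ℝ)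
    (hC : 0 < C) (hμ : 0 < μ) (hε : 0 < ε) (hp : (d : ℝ) < p) (hη : 0 < η) (hδ : 0 < δ)
    (hr0 : lam1 L ≤ r0) (hr0' : r0 < lam2 L) :
    ∃ θ0 : ℝ, 0 < θ0 ∧
      ∀ θ : ℝ, 0 ≤ θ → θ ≤ θ0 →
        ∀ V : ℝ → ℝ, Admissible d V →
          |pressure L V| ≤ C * θ ^ (1 + μ) →
          (∀ r : ℝ, r0 < r → |deriv (deriv V) r| ≤ θ ^ (2 + ε) * r ^ (-p - 2)) →
          (∀ r : ℝ, r ∈ Set.Ioo (lam1 L - δ) (lam1 L + δ) → η ≤ deriv (deriv V) r) →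
          (∑' x : {x : Esp d // x ∈ L ∧ x ≠ 0},
              (‖(x : Esp d)‖ ^ 2 * deriv (deriv V) ‖(x : Esp d)‖
                - ‖(x : Esp d)‖ * deriv V ‖(x : Esp d)‖)) ≥
            (lam1 L) ^ 2 * (mCard L (lam1 L) : ℝ) * η - θ ^ (2 + ε) * zetaStar L p
              - C * θ ^ (1 + μ) ∧
          (0 : ℝ) < (lam1 L) ^ 2 * (mCard L (lam1 L) : ℝ) * η - θ ^ (2 + ε) * zetaStar L p
              - C * θ ^ (1 + μ) :=
  statement9_general d L hL C μ ε p η δ r0 hμ hε hp hη hδ hr0 hr0'
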